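/- arXiv:2411.19724 — 2 statements merged into one kernel-verified Lean document; each statement's English description precedes it below -/
import Mathlib

section
/- For any fixed lower bound LB and upper bound UB on the optimal radius with LB ≤ UB+1, and any α, the set of clipped rounded distances { min(max(LB, 10^α·⌊d_{ij}/10^α⌋), UB+1) : i ∈ N, j ∈ M } has cardinality at most ⌈(UB + 1 − LB)/10^α⌉ + 2. -/
theorem clipped_rounded_distinct_card {N M : Type*} [Fintype N] [Fintype M]
    (d : N → M → ℝ) (hd : ∀ i j, 0 ≤ d i j) (LB UB : ℝ) (hLU : LB ≤ UB + 1) (α : ℕ) :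
    (((Finset.univ : Finset N) ×ˢ (Finset.univ : Finset M)).image
        (fun ij => min (max LB ((10:ℝ)^α * (⌊d ij.1 ij.2 / (10:ℝ)^α⌋ : ℝ))) (UB + 1))).card
      ≤ ⌈(UB + 1 - LB) / (10:ℝ)^α⌉ + 2 := by
  set c : ℝ := (10:ℝ)^α with hc
  have hcpos : (0:ℝ) < c := by positivity
  set S : Finset ℤ := Finset.Ioo ⌊LB / c⌋ ⌈(UB+1)/c⌉ with hS
  have hsub : (((Finset.univ : Finset N) ×ˢ (Finset.univ : Finset M)).image
        (fun ij => min (max LB (c * (⌊d ij.1 ij.2 / c⌋ : ℝ))) (UB + 1)))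
      ⊆ insert LB (insert (UB+1) (S.image (fun k : ℤ => c * (k:ℝ)))) := by
    intro x hx
    simp only [Finset.mem_image] at hx
    obtain ⟨ij, -, rfl⟩ := hx
    set k := ⌊d ij.1 ij.2 / c⌋ with hk
    by_cases h1 : c * (k:ℝ) ≤ LB
    · simp only [Finset.mem_insert]
      left
      rw [max_eq_left h1, min_eq_left hLU]
    · push_neg at h1
      by_cases h2 : UB + 1 ≤ c * (k:ℝ)
      · simp only [Finset.mem_insert]
        right; left
        rw [max_eq_right h1.le, min_eq_right h2]
      · push_neg at h2
        simp only [Finset.mem_insert]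
        right; right
        rw [max_eq_right h1.le, min_eq_left h2.le]
        refine Finset.mem_image.2 ⟨k, ?_, rfl⟩
        rw [hS, Finset.mem_Ioo]
        constructor
        · rw [Int.floor_lt]
          rw [div_lt_iff₀ hcpos]; linarith [mul_comm c (k:ℝ)]
        · rw [Int.lt_ceil]
          rw [lt_div_iff₀ hcpos]; linarith [mul_comm c (k:ℝ)]
  have hcard : (((Finset.univ : Finset N) ×ˢ (Finset.univ : Finset M)).image
        (fun ij => min (max LB (c * (⌊d ij.1 ij.2 / c⌋ : ℝ))) (UB + 1))).card
      ≤ S.card + 2 := by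
    calc _ ≤ (insert LB (insert (UB+1) (S.image (fun k : ℤ => c * (k:ℝ))))).card :=
          Finset.card_le_card hsub
      _ ≤ (insert (UB+1) (S.image (fun k : ℤ => c * (k:ℝ)))).card + 1 :=
          Finset.card_insert_le _ _
      _ ≤ (S.image (fun k : ℤ => c * (k:ℝ))).card + 1 + 1 := by
          have := Finset.card_insert_le (UB+1) (S.image (fun k : ℤ => c * (k:ℝ)))
          omega
      _ ≤ S.card + 2 := by
          have := Finset.card_image_le (s := S) (f := fun k : ℤ => c * (k:ℝ))
          omega
  have hScard : (S.card : ℤ) ≤ ⌈(UB + 1 - LB) / c⌉ := by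
    rw [hS, Int.card_Ioo]
    have hceil0 : (0:ℤ) ≤ ⌈(UB + 1 - LB) / c⌉ := by
      exact Int.ceil_nonneg (div_nonneg (by linarith) hcpos.le)
    have hkey : ⌈(UB+1)/c⌉ - ⌊LB / c⌋ - 1 ≤ ⌈(UB + 1 - LB) / c⌉ := by
      have h1 : ((UB+1)/c : ℝ) ≤ ⌈(UB+1)/c⌉ := Int.le_ceil _
      have h2 : (⌈(UB+1)/c⌉ : ℝ) < (UB+1)/c + 1 := Int.ceil_lt_add_one _
      have h3 : (LB/c : ℝ) - 1 < ⌊LB / c⌋ := Int.sub_one_lt_floor _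
      have h4 : ((UB + 1 - LB) / c : ℝ) ≤ ⌈(UB + 1 - LB) / c⌉ := Int.le_ceil _
      have h5 : (UB + 1 - LB) / c = (UB+1)/c - LB/c := by ring
      have : ((⌈(UB+1)/c⌉ - ⌊LB / c⌋ - 1 : ℤ) : ℝ) < (⌈(UB + 1 - LB) / c⌉ : ℤ) + 1 := by
        push_cast
        linarith
      have := (by exact_mod_cast this : (⌈(UB+1)/c⌉ - ⌊LB / c⌋ - 1 : ℤ) < ⌈(UB + 1 - LB) / c⌉ + 1)
      omega
    omega
  have : ((((Finset.univ : Finset N) ×ˢ (Finset.univ : Finset M)).image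
        (fun ij => min (max LB (c * (⌊d ij.1 ij.2 / c⌋ : ℝ))) (UB + 1))).card : ℤ)
      ≤ (S.card : ℤ) + 2 := by exact_mod_cast hcard
  linarith
end

section
/- The optimal value of the p-center problem over all sites equals the optimal value of the p-center problem restricted to the non-dominated sites. -/
open scoped Classical

def Dominated {ι : Type*} {M : ℕ} (d : ι → Fin M → ℝ) (R : Finset ι)
    (j₁ j₂ : Fin M) : Prop :=
  (∀ i ∈ R, d i j₂ ≤ d i j₁) ∧ ((∃ i ∈ R, d i j₂ < d i j₁) ∨ j₁ < j₂)

noncomputable def radOn {ι : Type*} {M : ℕ} (d : ι → Fin M → ℝ)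
    (R : Finset ι) (hR : R.Nonempty) (S : Finset (Fin M)) (hS : S.Nonempty) : ℝ :=
  R.sup' hR fun i => S.inf' hS fun j => d i j

noncomputable def optOnSites {ι : Type*} {M : ℕ} (d : ι → Fin M → ℝ)
    (R : Finset ι) (hR : R.Nonempty) (p : ℕ) (J : Finset (Fin M)) : ℝ :=
  sInf {r | ∃ S : Finset (Fin M), S ⊆ J ∧
    ∃ hS : S.Nonempty, S.card ≤ p ∧ r = radOn d R hR S hS}

/-! Replacing every site of a solution by a non-dominated site at least as close to every client
keeps the number of sites and does not increase the radius, so both infima range over sets each of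
whose elements is bounded below by an element of the other. The non-dominated replacement of a
site `j` minimises, among the sites at least as close as `j` to every client, the total distance
and then the negated index: domination strictly decreases this key. -/

section Domination

variable {ι : Type*} {M : ℕ} (d : ι → Fin M → ℝ) (R : Finset ι)

noncomputable def dominanceKey (j : Fin M) : Lex (ℝ × (Fin M)ᵒᵈ) :=
  toLex (∑ i ∈ R, d i j, OrderDual.toDual j)

variable {d R}

theorem Dominated.dominanceKey_lt {j₁ j₂ : Fin M} (h : Dominated d R j₁ j₂) :
    dominanceKey d R j₂ < dominanceKey d R j₁ := by
  obtain ⟨hle, hstrict | hidx⟩ := h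
  · exact Prod.Lex.toLex_lt_toLex.2 (Or.inl (Finset.sum_lt_sum hle hstrict))
  · rcases (Finset.sum_le_sum hle).lt_or_eq with hlt | heq
    · exact Prod.Lex.toLex_lt_toLex.2 (Or.inl hlt)
    · exact Prod.Lex.toLex_lt_toLex.2 (Or.inr ⟨heq, OrderDual.toDual_lt_toDual.2 hidx⟩)

variable (d R)

theorem exists_nondominated_le (j : Fin M) :
    ∃ j', (¬ ∃ j'', Dominated d R j' j'') ∧ ∀ i ∈ R, d i j' ≤ d i j := by
  let T := Finset.univ.filter fun j' => ∀ i ∈ R, d i j' ≤ d i j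
  obtain ⟨j', hj'T, hmin⟩ :=
    T.exists_min_image (dominanceKey d R) ⟨j, by simp [T]⟩
  have hj' : ∀ i ∈ R, d i j' ≤ d i j := (Finset.mem_filter.1 hj'T).2
  refine ⟨j', fun ⟨j'', hdom⟩ => ?_, hj'⟩
  have hj''T : j'' ∈ T := by
    simpa [T] using fun i hi => (hdom.1 i hi).trans (hj' i hi)
  exact (hmin j'' hj''T).not_gt hdom.dominanceKey_lt

end Domination

theorem radOn_le_of_forall_exists_le {ι : Type*} {M : ℕ} {d : ι → Fin M → ℝ} {R : Finset ι}
    (hR : R.Nonempty) {S S' : Finset (Fin M)} (hS : S.Nonempty) (hS' : S'.Nonempty)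
    (h : ∀ j ∈ S, ∃ j' ∈ S', ∀ i ∈ R, d i j' ≤ d i j) :
    radOn d R hR S' hS' ≤ radOn d R hR S hS := by
  refine Finset.sup'_mono_fun fun i hi => Finset.le_inf' _ _ fun j hj => ?_
  obtain ⟨j', hj', hle⟩ := h j hj
  exact Finset.inf'_le_of_le _ hj' (hle i hi)

theorem opt_eq_opt_on_nondominated_general {ι : Type*} {M : ℕ}
    (d : ι → Fin M → ℝ) (R : Finset ι) (hR : R.Nonempty) (p : ℕ) :
    optOnSites d R hR p Finset.univ =
      optOnSites d R hR p
        (Finset.univ.filter fun j => ¬ ∃ j', Dominated d R j j') := by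
  choose g hg_nondom hg_le using exists_nondominated_le d R
  apply csInf_eq_csInf_of_forall_exists_le
  · rintro _ ⟨S, -, hS, hcard, rfl⟩
    refine ⟨_, ⟨S.image g, fun j hj => ?_, hS.image g, Finset.card_image_le.trans hcard, rfl⟩,
      radOn_le_of_forall_exists_le hR hS _ fun j hj => ⟨g j, Finset.mem_image_of_mem g hj, hg_le j⟩⟩
    obtain ⟨j, -, rfl⟩ := Finset.mem_image.1 hj
    simpa using hg_nondom j
  · rintro _ ⟨S, -, hS, hcard, rfl⟩
    exact ⟨_, ⟨S, Finset.subset_univ S, hS, hcard, rfl⟩, le_rfl⟩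

theorem opt_eq_opt_on_nondominated {ι : Type*} {M : ℕ} (hM : 0 < M)
    (d : ι → Fin M → ℝ) (R : Finset ι) (hR : R.Nonempty) (p : ℕ) (hp : 1 ≤ p) :
    optOnSites d R hR p Finset.univ =
      optOnSites d R hR p
        (Finset.univ.filter fun j => ¬ ∃ j', Dominated d R j j') :=
  opt_eq_opt_on_nondominated_general d R hR p
end
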